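/- Let φ be a one-variable first-order modal formula with counting quantifiers and let Q = (W,≺,q,I,{r_i}_{i∈I}) be a quasimodel for φ. Define the constant domain first-order Kripke model M = (W,≺,D,d,I') with D = I, d(w) = I for all w ∈ W, and I'(w,P) = {i ∈ I : P(x) ∈ r_i(w)} for every unary predicate P. Then for every w ∈ W, every i ∈ I, and every ψ ∈ sub(φ): M,w ⊨^i ψ if and only if ψ ∈ r_i(w). In particular, there exist w₀ ∈ W and i₀ ∈ I with M,w₀ ⊨^{i₀} φ, so φ is satisfiable with respect to QK. -/

import Mathlib

/-! Syntax of one-variable first-order modal formulas with counting quantifiers: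
    φ ::= P(x) | ¬φ | (φ∧φ) | ◇φ | ∃[≤c]x φ. -/

inductive Fml : Type
  | atom : ℕ → Fml
  | neg : Fml → Fml
  | conj : Fml → Fml → Fml
  | dia : Fml → Fml
  | countLe : ℕ → Fml → Fml
deriving DecidableEq

namespace Fml

/-- Subformulas. -/
def sub : Fml → Finset Fml
  | atom n => {atom n}
  | neg ψ => insert (neg ψ) ψ.sub
  | conj ψ χ => insert (conj ψ χ) (ψ.sub ∪ χ.sub)
  | dia ψ => insert (dia ψ) ψ.sub
  | countLe c ψ => insert (countLe c ψ) ψ.sub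

/-- Modal depth. -/
def md : Fml → ℕ
  | atom _ => 0
  | neg ψ => ψ.md
  | conj ψ χ => max ψ.md χ.md
  | dia ψ => ψ.md + 1
  | countLe _ ψ => ψ.md

/-- Capacity: the largest counting-quantifier subscript (0 if none). -/
def cpt : Fml → ℕ
  | atom _ => 0
  | neg ψ => ψ.cpt
  | conj ψ χ => max ψ.cpt χ.cpt
  | dia ψ => ψ.cpt
  | countLe c ψ => max c ψ.cpt

/-- Length of the formula as a string, counting subscripts written in binary. -/
def len : Fml → ℕ
  | atom _ => 1
  | neg ψ => ψ.len + 1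
  | conj ψ χ => ψ.len + χ.len + 1
  | dia ψ => ψ.len + 1
  | countLe c ψ => ψ.len + Nat.size c + 1

/-- Predicate symbols occurring in a formula. -/
def preds : Fml → Finset ℕ
  | atom n => {n}
  | neg ψ => ψ.preds
  | conj ψ χ => ψ.preds ∪ χ.preds
  | dia ψ => ψ.preds
  | countLe _ ψ => ψ.preds

def imp (ψ χ : Fml) : Fml := neg (conj ψ (neg χ))
def or (ψ χ : Fml) : Fml := neg (conj (neg ψ) (neg χ))
def iff (ψ χ : Fml) : Fml := conj (ψ.imp χ) (χ.imp ψ)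
def box (ψ : Fml) : Fml := neg (dia (neg ψ))
/-- `∃x ψ := ¬∃[≤0]x ψ`. -/
def ex (ψ : Fml) : Fml := neg (countLe 0 ψ)
/-- `∀x ψ := ∃[≤0]x ¬ψ`. -/
def fal (ψ : Fml) : Fml := countLe 0 (neg ψ)
/-- A tautology. -/
def top : Fml := neg (conj (atom 0) (neg (atom 0)))

/-- `boxIter n ψ` is `□^n ψ`. -/
def boxIter : ℕ → Fml → Fml
  | 0, ψ => ψ
  | n+1, ψ => (boxIter n ψ).box

/-- `boxLe m ψ` is `⋀_{k=0}^{m} □^k ψ`. -/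
def boxLe : ℕ → Fml → Fml
  | 0, ψ => ψ
  | n+1, ψ => conj (boxLe n ψ) (boxIter (n+1) ψ)

end Fml

/-- A first-order Kripke model `M = (W,R,D,d,I)` (unary predicates suffice for the
one-variable fragment). -/
structure KModel where
  W : Type
  R : W → W → Prop
  D : Type
  Dne : Nonempty D
  dom : W → Set D
  domNe : ∀ w, (dom w).Nonempty
  I : W → ℕ → Set D
  Isub : ∀ w p, I w p ⊆ dom w

/-- Satisfaction `M,w ⊨^a φ`. -/
def KModel.sat (M : KModel) : Fml → M.W → M.D → Prop
  | .atom p, w, a => a ∈ M.I w p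
  | .neg ψ, w, a => ¬ M.sat ψ w a
  | .conj ψ χ, w, a => M.sat ψ w a ∧ M.sat χ w a
  | .dia ψ, w, a => ∃ v, M.R w v ∧ M.sat ψ v a
  | .countLe c ψ, w, _ => {b | b ∈ M.dom w ∧ M.sat ψ w b}.encard ≤ (c : ℕ∞)

def KModel.constDom (M : KModel) : Prop := ∀ u v, M.dom u = M.dom v
def KModel.expDom (M : KModel) : Prop := ∀ u v, M.R u v → M.dom u ⊆ M.dom v
def KModel.decDom (M : KModel) : Prop := ∀ u v, M.R u v → M.dom v ⊆ M.dom u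

/-- Satisfiability with respect to QK (constant domains). -/
def satQK (φ : Fml) : Prop :=
  ∃ M : KModel, M.constDom ∧ ∃ w a, a ∈ M.dom w ∧ M.sat φ w a

/-- Satisfiability with respect to QK^exp (expanding domains). -/
def satQKexp (φ : Fml) : Prop :=
  ∃ M : KModel, M.expDom ∧ ∃ w a, a ∈ M.dom w ∧ M.sat φ w a

/-- Satisfiability with respect to QK^dec (decreasing domains). -/
def satQKdec (φ : Fml) : Prop :=
  ∃ M : KModel, M.decDom ∧ ∃ w a, a ∈ M.dom w ∧ M.sat φ w a

/-- `R` is the immediate-successor (parent–child) relation of a rooted irreflexive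
intransitive tree of depth ≤ m with root `r`. -/
def IsTreeOfDepth {W : Type} (R : W → W → Prop) (r : W) (m : ℕ) : Prop :=
  ∃ depth : W → ℕ,
    depth r = 0 ∧ (∀ w, depth w ≤ m) ∧
    (∀ u v, R u v → depth v = depth u + 1) ∧
    (∀ v, v ≠ r → ∃! u, R u v) ∧
    (∀ v, Relation.ReflTransGen R r v)

/-- A type for φ: a Boolean-saturated subset of sub(φ). -/
def IsType (φ : Fml) (t : Finset Fml) : Prop :=
  t ⊆ φ.sub ∧
  (∀ ψ, Fml.neg ψ ∈ φ.sub → (Fml.neg ψ ∈ t ↔ ψ ∉ t)) ∧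
  (∀ ψ χ, Fml.conj ψ χ ∈ φ.sub → (Fml.conj ψ χ ∈ t ↔ ψ ∈ t ∧ χ ∈ t))

/-- A quasistate for φ: a nonempty set of types with a multiplicity function
`μ : T → {1,…,cpt(φ)+1}` satisfying ∃[≤c]-saturation. -/
structure IsQuasistate (φ : Fml) (T : Finset (Finset Fml)) (μ : Finset Fml → ℕ) : Prop where
  nonempty : T.Nonempty
  types : ∀ t ∈ T, IsType φ t
  mu_pos : ∀ t ∈ T, 1 ≤ μ t
  mu_le : ∀ t ∈ T, μ t ≤ φ.cpt + 1
  count : ∀ t ∈ T, ∀ c ξ, Fml.countLe c ξ ∈ φ.sub →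
    (Fml.countLe c ξ ∈ t ↔ (T.filter (fun t' => ξ ∈ t')).sum μ ≤ c)

/-- `(W,≺,q,I,{r_i})` is a quasimodel for φ. -/
structure IsQuasimodel (φ : Fml) {W I : Type} (prec : W → W → Prop) (root : W)
    (T : W → Finset (Finset Fml)) (μ : W → Finset Fml → ℕ)
    (r : I → W → Finset Fml) : Prop where
  tree : IsTreeOfDepth prec root φ.md
  qs : ∀ w, IsQuasistate φ (T w) (μ w)
  ine : Nonempty I
  run : ∀ i w, r i w ∈ T w
  witness : ∃ w t, t ∈ T w ∧ φ ∈ t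
  coherence : ∀ i w v ξ, Fml.dia ξ ∈ φ.sub → prec w v → ξ ∈ r i v → Fml.dia ξ ∈ r i w
  saturation : ∀ i w ξ, Fml.dia ξ ∈ φ.sub → Fml.dia ξ ∈ r i w → ∃ v, prec w v ∧ ξ ∈ r i v
  mult : ∀ w t, t ∈ T w → (μ w t : ℕ∞) = min {i : I | r i w = t}.encard ((φ.cpt : ℕ∞) + 1)

/-- Bundled quasimodels for φ. -/
structure Quasimodel (φ : Fml) where
  W : Type
  I : Type
  prec : W → W → Prop
  root : W
  T : W → Finset (Finset Fml)
  μ : W → Finset Fml → ℕ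
  r : I → W → Finset Fml
  isQM : IsQuasimodel φ prec root T μ r

/-- The constant domain model induced by a quasimodel: `D = I`, `d(w) = I`,
`I'(w,P) = {i : P(x) ∈ r_i(w)}`. -/
def Quasimodel.toModel {φ : Fml} (Q : Quasimodel φ) : KModel where
  W := Q.W
  R := Q.prec
  D := Q.I
  Dne := Q.isQM.ine
  dom _ := Set.univ
  domNe _ := by haveI := Q.isQM.ine; exact Set.univ_nonempty
  I w p := {i | Fml.atom p ∈ Q.r i w}
  Isub _ _ := Set.subset_univ _

/-! The truth lemma goes by induction on `ψ`: the Boolean cases are the closure conditions on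
types, and `◇` is coherence together with saturation. For `∃[≤c]x ξ`, the individuals
satisfying `ξ` at `w` split into the fibres `{i | r_i(w) = t}` over the types `t ∋ ξ` of `q(w)`,
and `μ_w` records these fibre sizes capped at `cpt φ + 1`. Since `c ≤ cpt φ`, the cap does not
affect whether the sum is at most `c`. Finally `μ_w ≥ 1` provides a run through the type that
contains `φ`. -/

lemma Set.encard_preimage_finset {ι α : Type*} (f : ι → α) (F : Finset α) :
    (f ⁻¹' ↑F).encard = ∑ t ∈ F, (f ⁻¹' {t}).encard := by
  rw [← finsum_mem_coe_finset, ← F.finite_toSet.encard_biUnion, biUnion_preimage_singleton]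
  exact fun a _ b _ hab => (disjoint_singleton.2 hab).preimage f

lemma ENat.sum_le_iff_sum_min_le {α : Type*} {s : Finset α} (e : α → ℕ∞) {c m : ℕ∞}
    (hcm : c < m) : ∑ t ∈ s, e t ≤ c ↔ ∑ t ∈ s, min (e t) m ≤ c := by
  by_cases! hle : ∀ t ∈ s, e t ≤ m
  · rw [Finset.sum_congr rfl fun t ht => min_eq_left (hle t ht)]
  obtain ⟨t, ht, hmt⟩ := hle
  have single_le {g : α → ℕ∞} : g t ≤ ∑ t ∈ s, g t := Finset.single_le_sum (fun _ _ => zero_le) ht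
  have he : m ≤ ∑ t ∈ s, e t := hmt.le.trans single_le
  have hmin : m ≤ ∑ t ∈ s, min (e t) m := (min_eq_right hmt.le).ge.trans single_le
  exact iff_of_false (fun h => (he.trans h).not_gt hcm) (fun h => (hmin.trans h).not_gt hcm)

namespace Fml

lemma mem_sub_self (φ : Fml) : φ ∈ φ.sub := by
  cases φ <;> simp [sub]

lemma sub_subset_of_mem {φ ψ : Fml} (h : ψ ∈ φ.sub) : ψ.sub ⊆ φ.sub := by
  induction φ with
  | atom n => simp_all [sub]
  | neg χ ih | dia χ ih | countLe _ χ ih =>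
    simp only [sub, Finset.mem_insert] at h
    rcases h with rfl | h
    · rfl
    · exact (ih h).trans (Finset.subset_insert _ _)
  | conj χ₁ χ₂ ih₁ ih₂ =>
    simp only [sub, Finset.mem_insert, Finset.mem_union] at h
    rcases h with rfl | h | h
    · rfl
    · exact (ih₁ h).trans (Finset.subset_union_left.trans (Finset.subset_insert _ _))
    · exact (ih₂ h).trans (Finset.subset_union_right.trans (Finset.subset_insert _ _))

lemma cpt_le_of_mem_sub {φ ψ : Fml} (h : ψ ∈ φ.sub) : ψ.cpt ≤ φ.cpt := by
  induction φ with
  | atom n => simp_all [sub]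
  | neg χ ih | dia χ ih =>
    simp only [sub, Finset.mem_insert] at h
    rcases h with rfl | h
    · rfl
    · exact ih h
  | countLe c χ ih =>
    simp only [sub, Finset.mem_insert] at h
    rcases h with rfl | h
    · rfl
    · exact (ih h).trans (le_max_right _ _)
  | conj χ₁ χ₂ ih₁ ih₂ =>
    simp only [sub, Finset.mem_insert, Finset.mem_union] at h
    rcases h with rfl | h | h
    · rfl
    · exact (ih₁ h).trans (le_max_left _ _)
    · exact (ih₂ h).trans (le_max_right _ _)

end Fml

namespace Quasimodel

variable {φ : Fml} (Q : Quasimodel φ)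

lemma run_isType (i : Q.I) (w : Q.W) : IsType φ (Q.r i w) :=
  (Q.isQM.qs w).types _ (Q.isQM.run i w)

lemma exists_run_eq {w : Q.W} {t : Finset Fml} (ht : t ∈ Q.T w) : ∃ i, Q.r i w = t := by
  have hmult := Q.isQM.mult w t ht
  have hpos := (Q.isQM.qs w).mu_pos t ht
  by_contra! h
  have hempty : {i | Q.r i w = t} = ∅ := Set.eq_empty_of_forall_notMem h
  rw [hempty, Set.encard_empty, min_eq_left zero_le, Nat.cast_eq_zero] at hmult
  omega

lemma encard_setOf_mem_run_le_iff {w : Q.W} {c : ℕ} (hc : c ≤ φ.cpt) (ξ : Fml) :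
    {i | ξ ∈ Q.r i w}.encard ≤ c ↔ ((Q.T w).filter (ξ ∈ ·)).sum (Q.μ w) ≤ c := by
  have hfibres : {i | ξ ∈ Q.r i w} = (Q.r · w) ⁻¹' ↑((Q.T w).filter (ξ ∈ ·)) := by
    ext i
    simp [Q.isQM.run i w]
  have hcap : (c : ℕ∞) < φ.cpt + 1 := by exact_mod_cast Nat.lt_succ_of_le hc
  rw [hfibres, Set.encard_preimage_finset, ENat.sum_le_iff_sum_min_le _ hcap,
    ← Nat.cast_le (α := ℕ∞), Nat.cast_sum,
    Finset.sum_congr rfl fun t ht => Q.isQM.mult w t (Finset.mem_filter.1 ht).1]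
  rfl

theorem sat_toModel_iff {ψ : Fml} (hψ : ψ ∈ φ.sub) (w : Q.W) (i : Q.I) :
    Q.toModel.sat ψ w i ↔ ψ ∈ Q.r i w := by
  induction ψ generalizing w i with
  | atom p => rfl
  | neg χ ih =>
    have hχ : χ ∈ φ.sub := Fml.sub_subset_of_mem hψ (by simp [Fml.sub, Fml.mem_sub_self])
    rw [(Q.run_isType i w).2.1 χ hψ, ← ih hχ]
    rfl
  | conj χ₁ χ₂ ih₁ ih₂ =>
    have hχ₁ : χ₁ ∈ φ.sub := Fml.sub_subset_of_mem hψ (by simp [Fml.sub, Fml.mem_sub_self])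
    have hχ₂ : χ₂ ∈ φ.sub := Fml.sub_subset_of_mem hψ (by simp [Fml.sub, Fml.mem_sub_self])
    rw [(Q.run_isType i w).2.2 χ₁ χ₂ hψ, ← ih₁ hχ₁, ← ih₂ hχ₂]
    rfl
  | dia χ ih =>
    have hχ : χ ∈ φ.sub := Fml.sub_subset_of_mem hψ (by simp [Fml.sub, Fml.mem_sub_self])
    constructor
    · rintro ⟨v, hwv, hv⟩
      exact Q.isQM.coherence i w v χ hψ hwv ((ih hχ v i).1 hv)
    · intro h
      obtain ⟨v, hwv, hv⟩ := Q.isQM.saturation i w χ hψ h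
      exact ⟨v, hwv, (ih hχ v i).2 hv⟩
  | countLe c χ ih =>
    have hχ : χ ∈ φ.sub := Fml.sub_subset_of_mem hψ (by simp [Fml.sub, Fml.mem_sub_self])
    have hc : c ≤ φ.cpt := (le_max_left _ _).trans (Fml.cpt_le_of_mem_sub hψ)
    have hsat : {b : Q.I | b ∈ Q.toModel.dom w ∧ Q.toModel.sat χ w b} = {b | χ ∈ Q.r b w} := by
      ext b
      exact (and_iff_right trivial).trans (ih hχ w b)
    change {b : Q.I | b ∈ Q.toModel.dom w ∧ Q.toModel.sat χ w b}.encard ≤ c ↔ _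
    rw [hsat, Q.encard_setOf_mem_run_le_iff hc, (Q.isQM.qs w).count _ (Q.isQM.run i w) c χ hψ]

end Quasimodel

/-- in the model induced by a quasimodel, truth coincides with membership in
the run, and consequently φ is satisfiable with respect to QK. -/
theorem stmt_1 (φ : Fml) (Q : Quasimodel φ) :
    (∀ (w : Q.W) (i : Q.I) (ψ : Fml), ψ ∈ φ.sub →
      (Q.toModel.sat ψ w i ↔ ψ ∈ Q.r i w)) ∧
    (∃ (w₀ : Q.W) (i₀ : Q.I), Q.toModel.sat φ w₀ i₀) ∧
    satQK φ := by
  have truth := fun w i ψ (hψ : ψ ∈ φ.sub) => Q.sat_toModel_iff hψ w i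
  obtain ⟨w₀, t₀, ht₀, hφ⟩ := Q.isQM.witness
  obtain ⟨i₀, rfl⟩ := Q.exists_run_eq ht₀
  have hsat : Q.toModel.sat φ w₀ i₀ := (truth w₀ i₀ φ φ.mem_sub_self).2 hφ
  exact ⟨truth, ⟨w₀, i₀, hsat⟩, Q.toModel, fun _ _ => rfl, w₀, i₀, Set.mem_univ _, hsat⟩
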